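/- Commutation identity for the self-similar wave ODE (equation (2.4) of the paper, single-mode version): for every even integer n ≥ 4 and every integer a with 2 ≤ a ≤ n/2, there exist real constants p_a, q_a, p_a', q_a', q_a'' ≥ 1, depending only on n and a, such that for every λ ≥ 0 and every (a+2)-times continuously differentiable function ψ : (0,∞) → ℝ satisfying the mode-λ self-similar wave ODE on (0,∞), one has for all v > 0: v(v+1)²·ψ⁽ᵃ⁺²⁾(v) + (a + 1 − n/2)·(v+1)²·ψ⁽ᵃ⁺¹⁾(v) + [n(v+1) + p_a·v + q_a]·v·ψ⁽ᵃ⁺¹⁾(v) + (p_a'·v + q_a')·ψ⁽ᵃ⁾(v) + q_a''·ψ⁽ᵃ⁻¹⁾(v) + λ²·ψ⁽ᵃ⁾(v) = 0. -/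
import Mathlib


open Set Filter

/-- `ψ` solves the mode-`lam` self-similar wave ODE on `(0,∞)`:
`v(v+1)²·ψ'' + (1 − n/2)·(v+1)²·ψ' + n·v·(v+1)·ψ' + λ²·ψ = 0`. -/
def SolvesWaveODE (n : ℕ) (lam : ℝ) (ψ : ℝ → ℝ) : Prop :=
  ∀ v > (0:ℝ),
    v * (v + 1) ^ 2 * iteratedDeriv 2 ψ v
      + (1 - (n : ℝ) / 2) * (v + 1) ^ 2 * deriv ψ v
      + (n : ℝ) * v * (v + 1) * deriv ψ v
      + lam ^ 2 * ψ v = 0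

private lemma iterDW_eq {f : ℝ → ℝ} {s : Set ℝ} (hs : IsOpen s) {x : ℝ} (hx : x ∈ s) (j : ℕ) :
    iteratedDerivWithin j f s x = iteratedDeriv j f x := by
  rw [iteratedDerivWithin_eq_iteratedFDerivWithin, iteratedDeriv_eq_iteratedFDeriv,
    iteratedFDerivWithin_of_isOpen j hs hx]

private lemma hasDerivAt_iter {m j : ℕ} {ψ : ℝ → ℝ}
    (hψ : ContDiffOn ℝ m ψ (Ioi 0)) (hj : j + 1 ≤ m) {v : ℝ} (hv : 0 < v) :
    HasDerivAt (iteratedDeriv j ψ) (iteratedDeriv (j + 1) ψ v) v := by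
  have hjm : j < m := by omega
  have hdiff : DifferentiableOn ℝ (iteratedDerivWithin j ψ (Ioi 0)) (Ioi 0) :=
    hψ.differentiableOn_iteratedDerivWithin (by exact_mod_cast hjm) isOpen_Ioi.uniqueDiffOn
  have h1 : DifferentiableAt ℝ (iteratedDeriv j ψ) v := by
    have h2 := (hdiff v hv).differentiableAt (isOpen_Ioi.mem_nhds hv)
    exact h2.congr_of_eventuallyEq
      (eventually_of_mem (isOpen_Ioi.mem_nhds hv) fun w hw => (iterDW_eq isOpen_Ioi hw j).symm)
  rw [iteratedDeriv_succ]
  exact h1.hasDerivAt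

private lemma hasDerivAt_poly (a b c d v : ℝ) :
    HasDerivAt (fun w : ℝ => a*w^3 + b*w^2 + c*w + d) (3*a*v^2 + 2*b*v + c) v := by
  have h1 : HasDerivAt (fun w : ℝ => w^3) (3*v^2) v := by simpa using hasDerivAt_pow 3 v
  have h2 : HasDerivAt (fun w : ℝ => w^2) (2*v) v := by simpa using hasDerivAt_pow 2 v
  have h3 : HasDerivAt (fun w : ℝ => w) 1 v := hasDerivAt_id v
  have h := (((h1.const_mul a).add (h2.const_mul b)).add (h3.const_mul c)).add_const d
  rw [show (3*a*v^2 + 2*b*v + c : ℝ) = a*(3*v^2) + b*(2*v) + c*1 from by ring]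
  exact h

private lemma hasDerivAt_of_eq {f g : ℝ → ℝ} {d d' v : ℝ}
    (h : HasDerivAt f d v) (hfg : ∀ w, f w = g w) (hd : d = d') :
    HasDerivAt g d' v := by
  subst hd
  exact h.congr_of_eventuallyEq (Filter.Eventually.of_forall fun w => (hfg w).symm)

private lemma hasDerivAt_S {m k : ℕ} {ψ : ℝ → ℝ} (hψ : ContDiffOn ℝ m ψ (Ioi 0))
    (hk : k + 1 ≤ m) {v : ℝ} (hv : 0 < v) (S : ℝ) (hS : k = 0 → S = 0) :
    HasDerivAt (fun w => S * iteratedDeriv (k-1) ψ w) (S * iteratedDeriv k ψ v) v := by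
  have h := (hasDerivAt_iter hψ (show (k-1)+1 ≤ m by omega) hv).const_mul S
  rcases Nat.eq_zero_or_pos k with rfl | hkpos
  · rw [hS rfl]
    simp only [zero_mul]
    exact hasDerivAt_const v 0
  · have e : k - 1 + 1 = k := by omega
    rw [e] at h
    exact h

private lemma key (n m : ℕ) (lam : ℝ) (ψ : ℝ → ℝ)
    (hψ : ContDiffOn ℝ m ψ (Ioi 0)) (hode : SolvesWaveODE n lam ψ) :
    ∀ k : ℕ, k + 2 ≤ m → ∀ v : ℝ, 0 < v →
      v * (v+1)^2 * iteratedDeriv (k+2) ψ v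
      + ((k:ℝ) * (3*v^2+4*v+1) + (1+(n:ℝ)/2)*v^2 + 2*v + (1-(n:ℝ)/2)) * iteratedDeriv (k+1) ψ v
      + ((k:ℝ)*(3*(k:ℝ)+(n:ℝ)-1)*v + 2*(k:ℝ)^2) * iteratedDeriv k ψ v
      + ((k:ℝ)*((k:ℝ)-1)*((k:ℝ)-2) + (k:ℝ)*((k:ℝ)-1)*((n:ℝ)+2)/2) * iteratedDeriv (k-1) ψ v
      + lam^2 * iteratedDeriv k ψ v = 0 := by
  intro k
  induction k with
  | zero =>
    intro _ v hv
    have h := hode v hv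
    simp only [Nat.zero_add, Nat.cast_zero, Nat.zero_sub, iteratedDeriv_one, iteratedDeriv_zero,
      show (0:ℕ)+2 = 2 from rfl, show (0:ℕ)+1 = 1 from rfl, show (0:ℕ)-1 = 0 from rfl]
    linear_combination h
  | succ k ih =>
    intro hk v hv
    have hk' : k + 2 ≤ m := by omega
    have h3 := hasDerivAt_iter hψ (show (k+2)+1 ≤ m by omega) hv
    have h2 := hasDerivAt_iter hψ (show (k+1)+1 ≤ m by omega) hv
    have h1 := hasDerivAt_iter hψ (show k+1 ≤ m by omega) hv
    have hp1 : HasDerivAt (fun w : ℝ => w*(w+1)^2) (3*v^2+4*v+1) v :=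
      hasDerivAt_of_eq (hasDerivAt_poly 1 2 1 0 v) (fun w => by ring) (by ring)
    have hp2 : HasDerivAt
        (fun w : ℝ => (k:ℝ) * (3*w^2+4*w+1) + (1+(n:ℝ)/2)*w^2 + 2*w + (1-(n:ℝ)/2))
        (2*(3*(k:ℝ)+1+(n:ℝ)/2)*v + (4*(k:ℝ)+2)) v :=
      hasDerivAt_of_eq (hasDerivAt_poly 0 (3*(k:ℝ)+1+(n:ℝ)/2) (4*(k:ℝ)+2) ((k:ℝ)+1-(n:ℝ)/2) v)
        (fun w => by ring) (by ring)
    have hp3 : HasDerivAt (fun w : ℝ => (k:ℝ)*(3*(k:ℝ)+(n:ℝ)-1)*w + 2*(k:ℝ)^2)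
        ((k:ℝ)*(3*(k:ℝ)+(n:ℝ)-1)) v :=
      hasDerivAt_of_eq (hasDerivAt_poly 0 0 ((k:ℝ)*(3*(k:ℝ)+(n:ℝ)-1)) (2*(k:ℝ)^2) v)
        (fun w => by ring) (by ring)
    have hT4 := hasDerivAt_S hψ (show k+1 ≤ m by omega) hv
      ((k:ℝ)*((k:ℝ)-1)*((k:ℝ)-2) + (k:ℝ)*((k:ℝ)-1)*((n:ℝ)+2)/2)
      (fun hk0 => by subst hk0; norm_num)
    have hT5 := h1.const_mul (lam^2)
    have hsum := ((((hp1.mul h3).add (hp2.mul h2)).add ((hp3.mul h1))).add hT4).add hT5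
    have hzero : deriv (fun w : ℝ =>
        w * (w+1)^2 * iteratedDeriv (k+2) ψ w
        + ((k:ℝ) * (3*w^2+4*w+1) + (1+(n:ℝ)/2)*w^2 + 2*w + (1-(n:ℝ)/2)) * iteratedDeriv (k+1) ψ w
        + ((k:ℝ)*(3*(k:ℝ)+(n:ℝ)-1)*w + 2*(k:ℝ)^2) * iteratedDeriv k ψ w
        + ((k:ℝ)*((k:ℝ)-1)*((k:ℝ)-2) + (k:ℝ)*((k:ℝ)-1)*((n:ℝ)+2)/2) * iteratedDeriv (k-1) ψ w
        + lam^2 * iteratedDeriv k ψ w) v = 0 := by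
      have heq : (fun w : ℝ =>
          w * (w+1)^2 * iteratedDeriv (k+2) ψ w
          + ((k:ℝ) * (3*w^2+4*w+1) + (1+(n:ℝ)/2)*w^2 + 2*w + (1-(n:ℝ)/2)) * iteratedDeriv (k+1) ψ w
          + ((k:ℝ)*(3*(k:ℝ)+(n:ℝ)-1)*w + 2*(k:ℝ)^2) * iteratedDeriv k ψ w
          + ((k:ℝ)*((k:ℝ)-1)*((k:ℝ)-2) + (k:ℝ)*((k:ℝ)-1)*((n:ℝ)+2)/2) * iteratedDeriv (k-1) ψ w
          + lam^2 * iteratedDeriv k ψ w) =ᶠ[nhds v] (fun _ => (0:ℝ)) :=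
        eventually_of_mem (isOpen_Ioi.mem_nhds hv) (fun w hw => ih hk' w hw)
      rw [heq.deriv_eq, deriv_const]
    have hE0 := (hsum.deriv).symm.trans hzero
    simp only [show k+1+2 = k+3 from rfl, show k+1+1 = k+2 from rfl, Nat.add_sub_cancel]
    push_cast
    push_cast at hE0
    linear_combination hE0
  
/-- Commutation identity for the self-similar wave ODE (equation (2.4) of the
paper, single-mode version). -/
theorem commutation_identity (n : ℕ) (hn : Even n) (hn4 : 4 ≤ n)
    (a : ℕ) (ha2 : 2 ≤ a) (han : a ≤ n / 2) :
    ∃ pa qa pa' qa' qa'' : ℝ, 1 ≤ pa ∧ 1 ≤ qa ∧ 1 ≤ pa' ∧ 1 ≤ qa' ∧ 1 ≤ qa'' ∧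
      ∀ lam : ℝ, 0 ≤ lam → ∀ ψ : ℝ → ℝ,
        ContDiffOn ℝ (a + 2) ψ (Ioi 0) →
        SolvesWaveODE n lam ψ →
        ∀ v > (0:ℝ),
          v * (v + 1) ^ 2 * iteratedDeriv (a + 2) ψ v
            + ((a : ℝ) + 1 - (n : ℝ) / 2) * (v + 1) ^ 2 * iteratedDeriv (a + 1) ψ v
            + ((n : ℝ) * (v + 1) + pa * v + qa) * v * iteratedDeriv (a + 1) ψ v
            + (pa' * v + qa') * iteratedDeriv a ψ v
            + qa'' * iteratedDeriv (a - 1) ψ v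
            + lam ^ 2 * iteratedDeriv a ψ v = 0 := by
  have hA : (2:ℝ) ≤ (a:ℝ) := by exact_mod_cast ha2
  have hN : (4:ℝ) ≤ (n:ℝ) := by exact_mod_cast hn4
  refine ⟨2*(a:ℝ), 2*(a:ℝ), (a:ℝ)*(3*(a:ℝ)+(n:ℝ)-1), 2*(a:ℝ)^2,
    (a:ℝ)*((a:ℝ)-1)*((a:ℝ)-2) + (a:ℝ)*((a:ℝ)-1)*((n:ℝ)+2)/2,
    by nlinarith, by nlinarith, by nlinarith, by nlinarith, ?_,
    fun lam hlam ψ hψ hode v hv => ?_⟩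
  · have h1 : (0:ℝ) ≤ (a:ℝ)*((a:ℝ)-1)*((a:ℝ)-2) :=
      mul_nonneg (mul_nonneg (by linarith) (by linarith)) (by linarith)
    have h2 : (2:ℝ) ≤ (a:ℝ)*((a:ℝ)-1) := by nlinarith
    have h3 : (12:ℝ) ≤ ((a:ℝ)*((a:ℝ)-1)) * ((n:ℝ)+2) := by nlinarith [h2, hN]
    linarith
  have h := key n (a+2) lam ψ hψ hode a (le_refl _) v hv
  linear_combination h
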